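/- Suppose f : ℝ → ℝ² is integrable, f(ξ) ∈ D̃_ξ for a.e. ξ, and (ρ, ρu) = ∫_ℝ f(ξ) dξ. Then (ρ,u) lies in the macroscopic invariant domain D̃ = {(ρ,u) : ρ = 0 or ω_min ≤ u − a_γ ρ^θ and u + a_γ ρ^θ ≤ ω_max}. -/

import Mathlib

open MeasureTheory Real Set

noncomputable section

/-- J_λ = ∫_{-1}^1 (1-z²)^λ dz -/
def Jl (l : ℝ) : ℝ := ∫ z in (-1:ℝ)..1, (1 - z^2) ^ l

/-- θ = (γ-1)/2 -/
def th (γ : ℝ) : ℝ := (γ - 1) / 2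

/-- λ = 1/(γ-1) - 1/2 -/
def lam (γ : ℝ) : ℝ := 1 / (γ - 1) - 1 / 2

/-- a_γ = 2√(γκ)/(γ-1) -/
def ag (γ κ : ℝ) : ℝ := 2 * Real.sqrt (γ * κ) / (γ - 1)

/-- c_{γ,κ} = a_γ^{-2/(γ-1)} / J_λ -/
def cgk (γ κ : ℝ) : ℝ := ag γ κ ^ (-(2 / (γ - 1))) / Jl (lam γ)

/-- χ(ρ,ξ) = c_{γ,κ} (a_γ² ρ^{γ-1} - ξ²)_+^λ -/
def chi (γ κ ρ ξ : ℝ) : ℝ :=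
  cgk γ κ * (max (ag γ κ ^ 2 * ρ ^ (γ - 1) - ξ ^ 2) 0) ^ lam γ

/-- vector-valued Maxwellian -/
def Mx (γ κ ρ u ξ : ℝ) : ℝ × ℝ :=
  (chi γ κ ρ (ξ - u), ((1 - th γ) * u + th γ * ξ) * chi γ κ ρ (ξ - u))

/-- domain D = {f₀ > 0} ∪ {0} -/
def Dset : Set (ℝ × ℝ) := {f | 0 < f.1 ∨ f = 0}

/-- kinetic energy H(f,ξ) -/
def Hk (γ κ : ℝ) (f : ℝ × ℝ) (ξ : ℝ) : ℝ :=
  if f = 0 then 0 else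
    th γ / (1 - th γ) * (ξ ^ 2 / 2) * f.1
      + th γ / (2 * cgk γ κ ^ (1 / lam γ)) * (f.1 ^ (1 + 1 / lam γ) / (1 + 1 / lam γ))
      + 1 / (1 - th γ) * (1 / 2) * (f.2 ^ 2 / f.1)
      - th γ / (1 - th γ) * ξ * f.2

/-- u(f,ξ), inverse relation to f = M(ρ,u,ξ) -/
def uf (γ : ℝ) (f : ℝ × ℝ) (ξ : ℝ) : ℝ := (f.2 / f.1 - th γ * ξ) / (1 - th γ)

/-- ρ(f,ξ), inverse relation to f = M(ρ,u,ξ) -/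
def rf (γ κ : ℝ) (f : ℝ × ℝ) (ξ : ℝ) : ℝ :=
  ag γ κ ^ (-(2 / (γ - 1))) *
    (((f.2 / f.1 - ξ) / (1 - th γ)) ^ 2 + (f.1 / cgk γ κ) ^ (1 / lam γ)) ^ (1 / (γ - 1))

/-- kinetic Riemann invariant ω₁(f,ξ) -/
def om1 (γ κ : ℝ) (f : ℝ × ℝ) (ξ : ℝ) : ℝ :=
  uf γ f ξ - ag γ κ * rf γ κ f ξ ^ th γ

/-- kinetic Riemann invariant ω₂(f,ξ) -/
def om2 (γ κ : ℝ) (f : ℝ × ℝ) (ξ : ℝ) : ℝ :=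
  uf γ f ξ + ag γ κ * rf γ κ f ξ ^ th γ

/-- Υ_{l}(z) = ∫_1^z (y²-1)^l dy -/
def Ups (l z : ℝ) : ℝ := ∫ y in (1:ℝ)..z, (y ^ 2 - 1) ^ l

/-- entropy kernel Φ(ρ,u,ξ,v) -/
def Phi (γ κ ρ u ξ v : ℝ) : ℝ :=
  let w1 := u - ag γ κ * ρ ^ th γ
  let w2 := u + ag γ κ * ρ ^ th γ
  if w1 < ξ ∧ ξ < w2 ∧ w1 < v ∧ v < w2 then
    (1 - th γ) ^ 2 / th γ * (cgk γ κ / Jl (lam γ)) * |ξ - v| ^ (2 * lam γ - 1) *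
      Ups (lam γ - 1) (((ξ + v) * (w1 + w2) - 2 * (w1 * w2 + ξ * v)) / ((w2 - w1) * |ξ - v|))
  else 0

/-- kinetic entropy H_S(f,ξ) -/
def HS (γ κ : ℝ) (S : ℝ → ℝ) (f : ℝ × ℝ) (ξ : ℝ) : ℝ :=
  if f = 0 then 0 else ∫ v : ℝ, Phi γ κ (rf γ κ f ξ) (uf γ f ξ) ξ v * S v

/-- kinetic invariant domain D̃_ξ -/
def Dtil (γ κ ωmin ωmax ξ : ℝ) : Set (ℝ × ℝ) :=
  {f | f ∈ Dset ∧ (f = 0 ∨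
    (ωmin ≤ om1 γ κ f ξ ∧ om1 γ κ f ξ ≤ om2 γ κ f ξ ∧ om2 γ κ f ξ ≤ ωmax))}

/-- T_S(ρ,u) (subdifferential of η_S) -/
def TS (γ κ : ℝ) (S : ℝ → ℝ) (ρ u : ℝ) : ℝ × ℝ :=
  ((1 / Jl (lam γ)) * ∫ z in (-1:ℝ)..1, (1 - z ^ 2) ^ lam γ *
      (S (u + ag γ κ * ρ ^ th γ * z)
        + (th γ * ag γ κ * ρ ^ th γ * z - u) * deriv S (u + ag γ κ * ρ ^ th γ * z)),
   (1 / Jl (lam γ)) * ∫ z in (-1:ℝ)..1, (1 - z ^ 2) ^ lam γ *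
      deriv S (u + ag γ κ * ρ ^ th γ * z))

/-- inner product on ℝ² -/
def dot (a b : ℝ × ℝ) : ℝ := a.1 * b.1 + a.2 * b.2

/-!
For `f₁ > 0` put `s = (f₂ / f₁ - ξ) / (1 - θ)` and `P = (f₁ / c_{γ,κ}) ^ (1/λ)`. Then
`u(f, ξ) = ξ + s` and `a_γ ρ(f, ξ) ^ θ = √(s² + P)`, so `ω₂(f, ξ) ≤ ω` forces `ω - ξ > 0` and
`P ≤ (ω - ξ)² - 2 (ω - ξ) s`, an upper bound for `f₂` that is concave in `f₁`. Young's inequality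
linearises it: for every multiplier `μ`, `f₂ ≤ (ω - μ) f₁ + B_μ(ω - ξ)` with an explicit
integrable Beta-type profile `B_μ`. Integrating in `ξ` with `μ = a_γ (1 + θ) ρ^θ` gives
`ρ u ≤ ω ρ - a_γ ρ^(1+θ)`, i.e. `u + a_γ ρ^θ ≤ ω_max`. The lower bound follows from the
reflection `(ξ, f₁, f₂) ↦ (-ξ, f₁, -f₂)`, which turns `ω₁` into `-ω₂`.
-/

section Parameters

variable {γ κ : ℝ}

lemma th_pos (hγ : 1 < γ) : 0 < th γ := by unfold th; linarith

lemma th_lt_one (hγ' : γ < 3) : th γ < 1 := by unfold th; linarith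

lemma lam_pos (hγ : 1 < γ) (hγ' : γ < 3) : 0 < lam γ := by
  unfold lam
  have : 1 / 2 < 1 / (γ - 1) := one_div_lt_one_div_of_lt (by linarith) (by linarith)
  linarith

lemma two_div_sub_one_eq (hγ : 1 < γ) : 2 / (γ - 1) = 2 * lam γ + 1 := by
  unfold lam
  field_simp [(by linarith : γ - 1 ≠ 0)]
  ring

lemma th_eq_one_div (hγ : 1 < γ) : th γ = 1 / (2 * lam γ + 1) := by
  rw [← two_div_sub_one_eq hγ, th, one_div_div]

lemma ag_pos (hκ : 0 < κ) (hγ : 1 < γ) : 0 < ag γ κ := by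
  unfold ag
  have : 0 < √(γ * κ) := Real.sqrt_pos.2 (by positivity)
  have : 0 < γ - 1 := by linarith
  positivity

lemma Jl_pos {l : ℝ} (hl : 0 ≤ l) : 0 < Jl l := by
  refine intervalIntegral.intervalIntegral_pos_of_pos_on ?_ (fun z hz => ?_) (by norm_num)
  · exact ((continuous_const.sub (continuous_pow 2)).rpow_const
      fun _ => Or.inr hl).intervalIntegrable _ _
  · exact Real.rpow_pos_of_pos (by nlinarith [hz.1, hz.2]) _

lemma cgk_pos (hκ : 0 < κ) (hγ : 1 < γ) (hγ' : γ < 3) : 0 < cgk γ κ :=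
  div_pos (Real.rpow_pos_of_pos (ag_pos hκ hγ) _) (Jl_pos (lam_pos hγ hγ').le)

end Parameters

/-- The constant in the Legendre transform of `g ↦ g ^ ((L + 1) / L)`. -/
def youngConst (L : ℝ) : ℝ := L ^ L / (L + 1) ^ (L + 1)

lemma youngConst_pos {L : ℝ} (hL : 0 < L) : 0 < youngConst L := by
  unfold youngConst
  positivity

lemma mul_le_rpow_add_youngConst {L b g k : ℝ} (hL : 0 < L) (hb : 0 ≤ b) (hg : 0 ≤ g)
    (hk : 0 < k) : b * g ≤ k * g ^ ((L + 1) / L) + youngConst L * k ^ (-L) * b ^ (L + 1) := by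
  obtain ⟨q, hq⟩ : ∃ q, q = (L + 1) / L := ⟨_, rfl⟩
  rw [← hq]
  have hpq : (L + 1).HolderConjugate q := by
    rw [Real.holderConjugate_iff_eq_conjExponent (by linarith), hq, add_sub_cancel_right]
  have hq0 : 0 < q := by rw [hq]; positivity
  have hqk : 0 < q * k := by positivity
  have young := Real.young_inequality_of_nonneg (a := b * (q * k) ^ (-(1 / q)))
    (b := g * (q * k) ^ (1 / q)) (by positivity) (by positivity) hpq
  have lhs : b * (q * k) ^ (-(1 / q)) * (g * (q * k) ^ (1 / q)) = b * g := by
    rw [mul_mul_mul_comm, ← Real.rpow_add hqk, neg_add_cancel, Real.rpow_zero, mul_one]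
  have rhs₁ : (g * (q * k) ^ (1 / q)) ^ q / q = k * g ^ q := by
    rw [Real.mul_rpow hg (by positivity), ← Real.rpow_mul hqk.le,
      one_div_mul_cancel hq0.ne', Real.rpow_one]
    field_simp
  have rhs₂ : (b * (q * k) ^ (-(1 / q))) ^ (L + 1) / (L + 1)
      = youngConst L * k ^ (-L) * b ^ (L + 1) := by
    have hexp : -(1 / q) * (L + 1) = -L := by rw [hq]; field_simp
    have hqL : q ^ (-L) = L ^ L / (L + 1) ^ L := by
      rw [Real.rpow_neg hq0.le, hq, Real.div_rpow (by linarith) hL.le, inv_div]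
    rw [Real.mul_rpow hb (by positivity), ← Real.rpow_mul hqk.le, hexp,
      Real.mul_rpow hq0.le hk.le, hqL, youngConst, Real.rpow_add_one (by positivity : L + 1 ≠ 0)]
    field_simp
  rw [lhs, rhs₁, rhs₂] at young
  linarith

lemma pos_and_le_of_add_sqrt_le {s P A : ℝ} (hP : 0 < P) (h : s + √(s ^ 2 + P) ≤ A) :
    0 < A ∧ P ≤ A ^ 2 - 2 * A * s := by
  have habs : |s| < √(s ^ 2 + P) := by
    rw [← Real.sqrt_sq_eq_abs]
    exact Real.sqrt_lt_sqrt (sq_nonneg s) (by linarith)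
  have hsq := (Real.sqrt_le_left (by linarith [abs_nonneg s])).1 (le_sub_iff_add_le'.2 h)
  exact ⟨by linarith [neg_abs_le s], by nlinarith⟩

section Kinetic

variable {γ κ : ℝ}

lemma uf_eq_add (hγ' : γ < 3) (f : ℝ × ℝ) (ξ : ℝ) :
    uf γ f ξ = ξ + (f.2 / f.1 - ξ) / (1 - th γ) := by
  have : 1 - th γ ≠ 0 := (sub_pos.2 (th_lt_one hγ')).ne'
  rw [uf]
  field_simp
  ring

lemma ag_mul_rf_rpow_th (hκ : 0 < κ) (hγ : 1 < γ) (hγ' : γ < 3) {f : ℝ × ℝ} (hf : 0 ≤ f.1)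
    (ξ : ℝ) : ag γ κ * rf γ κ f ξ ^ th γ
      = √(((f.2 / f.1 - ξ) / (1 - th γ)) ^ 2 + (f.1 / cgk γ κ) ^ (1 / lam γ)) := by
  have ha := ag_pos hκ hγ
  have hB : 0 ≤ ((f.2 / f.1 - ξ) / (1 - th γ)) ^ 2 + (f.1 / cgk γ κ) ^ (1 / lam γ) :=
    add_nonneg (sq_nonneg _) (Real.rpow_nonneg (div_nonneg hf (cgk_pos hκ hγ hγ').le) _)
  have e₁ : -(2 / (γ - 1)) * th γ = -1 := by rw [th]; field_simp [(by linarith : γ - 1 ≠ 0)]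
  have e₂ : 1 / (γ - 1) * th γ = 1 / 2 := by rw [th]; field_simp [(by linarith : γ - 1 ≠ 0)]
  rw [rf, Real.mul_rpow (by positivity) (Real.rpow_nonneg hB _), ← Real.rpow_mul ha.le,
    ← Real.rpow_mul hB, e₁, e₂, Real.rpow_neg_one, ← mul_assoc, mul_inv_cancel₀ ha.ne', one_mul,
    Real.sqrt_eq_rpow]

def Kp (γ κ : ℝ) : ℝ := (1 - th γ) / (2 * cgk γ κ ^ (1 / lam γ))

lemma Kp_pos (hκ : 0 < κ) (hγ : 1 < γ) (hγ' : γ < 3) : 0 < Kp γ κ :=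
  div_pos (by linarith [th_lt_one hγ'])
    (mul_pos two_pos (Real.rpow_pos_of_pos (cgk_pos hκ hγ hγ') _))

lemma snd_le_of_om2_le (hκ : 0 < κ) (hγ : 1 < γ) (hγ' : γ < 3) {f : ℝ × ℝ} {ξ ω : ℝ}
    (hf : 0 < f.1) (h : om2 γ κ f ξ ≤ ω) :
    0 < ω - ξ ∧ f.2 ≤ ω * f.1 - (1 + th γ) / 2 * (ω - ξ) * f.1
      - Kp γ κ / (ω - ξ) * f.1 ^ ((lam γ + 1) / lam γ) := by
  have hθ : 0 < 1 - th γ := sub_pos.2 (th_lt_one hγ')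
  have hL := lam_pos hγ hγ'
  have hc := cgk_pos hκ hγ hγ'
  rw [om2, uf_eq_add hγ', ag_mul_rf_rpow_th hκ hγ hγ' hf.le] at h
  set s := (f.2 / f.1 - ξ) / (1 - th γ)
  set P := (f.1 / cgk γ κ) ^ (1 / lam γ)
  have hP : 0 < P := Real.rpow_pos_of_pos (div_pos hf hc) _
  obtain ⟨hA, hPA⟩ := pos_and_le_of_add_sqrt_le (s := s) (A := ω - ξ) hP (by linarith)
  refine ⟨hA, ?_⟩
  have hf₂ : f.2 = ((1 - th γ) * s + ξ) * f.1 := by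
    simp only [s]
    field_simp
    ring
  have hKp : Kp γ κ * f.1 ^ ((lam γ + 1) / lam γ) = (1 - th γ) * P * f.1 / 2 := by
    have hcL : cgk γ κ ^ (1 / lam γ) ≠ 0 := (Real.rpow_pos_of_pos hc _).ne'
    rw [Kp, show (lam γ + 1) / lam γ = 1 / lam γ + 1 by field_simp; ring,
      Real.rpow_add_one hf.ne']
    simp only [P]
    rw [Real.div_rpow hf.le hc.le]
    field_simp
  have key : 0 ≤ (1 - th γ) * f.1 * ((ω - ξ) ^ 2 - P - 2 * (ω - ξ) * s) / (2 * (ω - ξ)) := by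
    apply div_nonneg _ (by linarith)
    exact mul_nonneg (mul_nonneg hθ.le hf.le) (by linarith)
  rw [div_mul_eq_mul_div (Kp γ κ), hKp, hf₂, ← sub_nonneg]
  convert key using 1
  field_simp
  ring

end Kinetic

section BetaProfile

variable {l c μ : ℝ}

def betaProfile (l c μ A : ℝ) : ℝ := max (μ - c * A) 0 ^ (l + 1) * max A 0 ^ l

lemma betaProfile_nonneg (l c μ A : ℝ) : 0 ≤ betaProfile l c μ A :=
  mul_nonneg (Real.rpow_nonneg (le_max_right _ _) _) (Real.rpow_nonneg (le_max_right _ _) _)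

lemma betaProfile_eq_zero_of_notMem (hl : 0 < l) (hc : 0 < c) {A : ℝ} (hA : A ∉ Ioc 0 (μ / c)) :
    betaProfile l c μ A = 0 := by
  rw [mem_Ioc, not_and_or, not_lt, not_le] at hA
  rcases hA with hA | hA
  · rw [betaProfile, max_eq_right hA, Real.zero_rpow hl.ne', mul_zero]
  · rw [div_lt_iff₀ hc] at hA
    rw [betaProfile, max_eq_right (by linarith), Real.zero_rpow (by linarith), zero_mul]

lemma integrable_betaProfile (hl : 0 < l) (hc : 0 < c) : Integrable (betaProfile l c μ) := by
  refine Continuous.integrable_of_hasCompactSupport ?_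
    (HasCompactSupport.intro isCompact_Icc fun A hA =>
      betaProfile_eq_zero_of_notMem hl hc fun h => hA (Ioc_subset_Icc_self h))
  have hcont : Continuous fun A => max (μ - c * A) 0 :=
    (continuous_const.sub (continuous_const.mul continuous_id)).max continuous_const
  exact (hcont.rpow_const fun _ => Or.inr (by linarith)).mul
    ((continuous_id.max continuous_const).rpow_const fun _ => Or.inr hl.le)

lemma Jl_eq_integral_unitInterval (l : ℝ) :
    Jl l = 2 * 4 ^ l * ∫ t in (0 : ℝ)..1, ((1 - t) * t) ^ l := by
  have hsub := intervalIntegral.integral_comp_mul_add (a := 0) (b := 1)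
    (fun z : ℝ => (1 - z ^ 2) ^ l) two_ne_zero (-1)
  norm_num at hsub
  calc Jl l = 2 * ∫ t in (0 : ℝ)..1, (1 - (2 * t + -1) ^ 2) ^ l := by rw [hsub, Jl]; ring
    _ = 2 * ∫ t in (0 : ℝ)..1, 4 ^ l * ((1 - t) * t) ^ l := by
      congr 1
      refine intervalIntegral.integral_congr fun t ht => ?_
      rw [uIcc_of_le zero_le_one] at ht
      rw [show 1 - (2 * t + -1) ^ 2 = 4 * ((1 - t) * t) by ring,
        Real.mul_rpow (by norm_num) (mul_nonneg (by linarith [ht.2]) ht.1)]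
    _ = 2 * 4 ^ l * ∫ t in (0 : ℝ)..1, ((1 - t) * t) ^ l := by
      rw [intervalIntegral.integral_const_mul, mul_assoc]

lemma integral_betaProfile_one_one (hl : 0 < l) :
    ∫ t, betaProfile l 1 1 t = Jl l / 4 ^ (l + 1) := by
  have hint : ∀ {p q : ℝ}, 0 ≤ p → 0 ≤ q →
      IntervalIntegrable (fun t : ℝ => (1 - t) ^ p * t ^ q) volume 0 1 := fun hp hq =>
    ((continuous_const.sub continuous_id).rpow_const (fun _ => Or.inr hp) |>.mul
      (continuous_id.rpow_const fun _ => Or.inr hq)).intervalIntegrable _ _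
  have hrestrict : ∫ t, betaProfile l 1 1 t = ∫ t in (0 : ℝ)..1, (1 - t) ^ (l + 1) * t ^ l := by
    rw [← setIntegral_eq_integral_of_forall_compl_eq_zero fun t ht =>
        betaProfile_eq_zero_of_notMem hl one_pos (by rwa [div_one]),
      ← intervalIntegral.integral_of_le zero_le_one]
    refine intervalIntegral.integral_congr fun t ht => ?_
    rw [uIcc_of_le zero_le_one] at ht
    simp only [betaProfile, one_mul, max_eq_left ht.1, max_eq_left (sub_nonneg.2 ht.2)]
  have hswap : ∫ t in (0 : ℝ)..1, (1 - t) ^ l * t ^ (l + 1)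
      = ∫ t in (0 : ℝ)..1, (1 - t) ^ (l + 1) * t ^ l := by
    have h := intervalIntegral.integral_comp_sub_left (a := 0) (b := 1)
      (fun t => (1 - t) ^ (l + 1) * t ^ l) 1
    norm_num only [sub_sub_cancel, sub_zero, sub_self] at h
    rw [← h]
    exact intervalIntegral.integral_congr fun t _ => mul_comm _ _
  -- `((1 - t) t)^l = (1 - t)^(l+1) t^l + (1 - t)^l t^(l+1)`, and `t ↦ 1 - t` swaps the two terms
  have hsplit : ∫ t in (0 : ℝ)..1, ((1 - t) * t) ^ l
      = 2 * ∫ t in (0 : ℝ)..1, (1 - t) ^ (l + 1) * t ^ l := by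
    rw [two_mul]
    nth_rw 2 [← hswap]
    rw [← intervalIntegral.integral_add (hint (by linarith) hl.le) (hint hl.le (by linarith))]
    refine intervalIntegral.integral_congr fun t ht => ?_
    rw [uIcc_of_le zero_le_one] at ht
    have h₁ : 0 ≤ 1 - t := sub_nonneg.2 ht.2
    rw [Real.mul_rpow h₁ ht.1, Real.rpow_add_one' h₁ (by linarith),
      Real.rpow_add_one' ht.1 (by linarith)]
    ring
  rw [hrestrict, Jl_eq_integral_unitInterval, hsplit, Real.rpow_add_one (by norm_num)]
  field_simp
  ring

lemma betaProfile_div_mul (hμ : 0 ≤ μ) (hc : 0 < c) (t : ℝ) :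
    betaProfile l c μ (μ / c * t) = μ ^ (l + 1) * (μ / c) ^ l * betaProfile l 1 1 t := by
  have max_mul : ∀ {a : ℝ} (x : ℝ), 0 ≤ a → max (a * x) 0 = a * max x 0 := fun x ha => by
    rw [mul_max_of_nonneg _ _ ha, mul_zero]
  rw [betaProfile, betaProfile, show μ - c * (μ / c * t) = μ * (1 - 1 * t) by field_simp,
    max_mul _ hμ, max_mul _ (div_nonneg hμ hc.le), Real.mul_rpow hμ (le_max_right _ _),
    Real.mul_rpow (div_nonneg hμ hc.le) (le_max_right _ _)]
  ring

lemma integral_betaProfile (hl : 0 < l) (hc : 0 < c) (hμ : 0 < μ) :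
    ∫ A, betaProfile l c μ A = (μ ^ 2 / (4 * c)) ^ (l + 1) * Jl l := by
  have hμc : 0 < μ / c := div_pos hμ hc
  have hscale := Measure.integral_comp_mul_left (betaProfile l c μ) (μ / c)
  simp only [betaProfile_div_mul hμ.le hc, integral_const_mul, integral_betaProfile_one_one hl,
    abs_of_pos (inv_pos.2 hμc), smul_eq_mul] at hscale
  rw [eq_inv_mul_iff_mul_eq₀ hμc.ne'] at hscale
  rw [← hscale, show μ ^ 2 / (4 * c) = μ / c * μ / 4 by ring,
    Real.div_rpow (mul_pos hμc hμ).le (by norm_num : (0 : ℝ) ≤ 4), Real.mul_rpow hμc.le hμ.le,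
    Real.rpow_add_one hμc.ne']
  ring

end BetaProfile

-- both sides are products of real powers of `2, L, L + 1, 2L + 1, a, J`; compare their logarithms
lemma youngConst_mul_rpow_eq {L a J : ℝ} (hL : 0 < L) (ha : 0 < a) (hJ : 0 < J) :
    youngConst L * ((1 - 1 / (2 * L + 1)) / (2 * (a ^ (-(2 * L + 1)) / J) ^ (1 / L))) ^ (-L)
      * (a ^ 2 * (1 + 1 / (2 * L + 1)) / 2) ^ (L + 1) * J = a * (1 / (2 * L + 1)) := by
  rw [show 1 - 1 / (2 * L + 1) = 2 * L / (2 * L + 1) by field_simp; ring,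
    show 1 + 1 / (2 * L + 1) = 2 * (L + 1) / (2 * L + 1) by field_simp; ring]
  have hlhs : 0 < youngConst L
      * ((2 * L / (2 * L + 1)) / (2 * (a ^ (-(2 * L + 1)) / J) ^ (1 / L))) ^ (-L)
      * (a ^ 2 * (2 * (L + 1) / (2 * L + 1)) / 2) ^ (L + 1) * J := by
    have := youngConst_pos hL
    positivity
  rw [← Real.exp_log hlhs, ← Real.exp_log (by positivity : 0 < a * (1 / (2 * L + 1))), youngConst]
  congr 1
  simp (disch := positivity) only [Real.log_mul, Real.log_div, Real.log_rpow, Real.log_pow,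
    Real.log_one]
  field_simp
  ring

section LegendreBound

variable {γ κ : ℝ}

/-- `sup_{g ≥ 0} ((μ - (1 + θ) A / 2) g - (K' / A) g ^ (1 + 1/λ))` for `A > 0`: the Legendre dual
of the bound of `snd_le_of_om2_le`, with `A = ω - ξ`. -/
def legendreBound (γ κ μ A : ℝ) : ℝ :=
  youngConst (lam γ) * Kp γ κ ^ (-lam γ) * betaProfile (lam γ) ((1 + th γ) / 2) μ A

lemma snd_le_legendreBound (hκ : 0 < κ) (hγ : 1 < γ) (hγ' : γ < 3) {f : ℝ × ℝ} {ξ ω : ℝ}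
    (μ : ℝ) (hf : f = 0 ∨ (0 < f.1 ∧ om2 γ κ f ξ ≤ ω)) :
    f.2 ≤ (ω - μ) * f.1 + legendreBound γ κ μ (ω - ξ) := by
  have hK := Kp_pos hκ hγ hγ'
  have hL := lam_pos hγ hγ'
  rcases hf with rfl | ⟨hf, h⟩
  · rw [Prod.snd_zero, Prod.fst_zero, mul_zero, zero_add, legendreBound]
    exact mul_nonneg (by have := youngConst_pos hL; positivity) (betaProfile_nonneg _ _ _ _)
  obtain ⟨hA, hle⟩ := snd_le_of_om2_le hκ hγ hγ' hf h
  set A := ω - ξ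
  set b := max (μ - (1 + th γ) / 2 * A) 0
  have young := mul_le_rpow_add_youngConst hL (le_max_right _ _ : 0 ≤ b) hf.le (div_pos hK hA)
  have hbound : legendreBound γ κ μ A
      = youngConst (lam γ) * (Kp γ κ / A) ^ (-lam γ) * b ^ (lam γ + 1) := by
    rw [legendreBound, betaProfile, max_eq_left hA.le, Real.div_rpow hK.le hA.le,
      Real.rpow_neg hA.le, div_inv_eq_mul]
    ring
  have hb : (μ - (1 + th γ) / 2 * A) * f.1 ≤ b * f.1 :=
    mul_le_mul_of_nonneg_right (le_max_left _ _) hf.le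
  rw [hbound]
  linarith

lemma integrable_legendreBound_sub (hγ : 1 < γ) (hγ' : γ < 3) (μ ω : ℝ) :
    Integrable fun ξ => legendreBound γ κ μ (ω - ξ) :=
  ((integrable_betaProfile (lam_pos hγ hγ') (by linarith [th_pos hγ])).comp_sub_left ω).const_mul _

lemma integral_legendreBound_sub (hγ : 1 < γ) (hγ' : γ < 3) {μ : ℝ} (hμ : 0 < μ)
    (ω : ℝ) : ∫ ξ, legendreBound γ κ μ (ω - ξ) = youngConst (lam γ) * Kp γ κ ^ (-lam γ)
      * ((μ ^ 2 / (4 * ((1 + th γ) / 2))) ^ (lam γ + 1) * Jl (lam γ)) := by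
  simp only [legendreBound]
  rw [integral_const_mul, integral_sub_left_eq_self (betaProfile (lam γ) ((1 + th γ) / 2) μ),
    integral_betaProfile (lam_pos hγ hγ') (by linarith [th_pos hγ]) hμ]

/-- The multiplier `μ = a_γ (1 + θ) ρ^θ` is the one that makes the bound sharp. -/
lemma integral_legendreBound_sub_optimal (hκ : 0 < κ) (hγ : 1 < γ) (hγ' : γ < 3) {ρ : ℝ}
    (hρ : 0 < ρ) (ω : ℝ) :
    ∫ ξ, legendreBound γ κ (ag γ κ * (1 + th γ) * ρ ^ th γ) (ω - ξ)
      = ag γ κ * th γ * ρ ^ (1 + th γ) := by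
  have ha := ag_pos hκ hγ
  have hθ := th_pos hγ
  have hL := lam_pos hγ hγ'
  have hμsq : (ag γ κ * (1 + th γ) * ρ ^ th γ) ^ 2 / (4 * ((1 + th γ) / 2))
      = ag γ κ ^ 2 * (1 + th γ) / 2 * ρ ^ (2 * th γ) := by
    rw [mul_comm 2 (th γ), Real.rpow_mul hρ.le, Real.rpow_two]
    field_simp
    ring
  have hexp : 2 * th γ * (lam γ + 1) = 1 + th γ := by
    rw [th_eq_one_div hγ]
    field_simp
    ring
  rw [integral_legendreBound_sub hγ hγ' (by positivity), hμsq,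
    Real.mul_rpow (by positivity) (by positivity), ← Real.rpow_mul hρ.le, hexp]
  have hconst := youngConst_mul_rpow_eq hL ha (Jl_pos hL.le)
  rw [← th_eq_one_div hγ, ← two_div_sub_one_eq hγ] at hconst
  rw [← hconst, Kp, cgk]
  ring

end LegendreBound

section Macroscopic

variable {γ κ : ℝ}

lemma add_ag_mul_rpow_le (hκ : 0 < κ) (hγ : 1 < γ) (hγ' : γ < 3) {ω : ℝ} {f : ℝ → ℝ × ℝ}
    (hfi : Integrable f) (hf : ∀ᵐ ξ, f ξ = 0 ∨ (0 < (f ξ).1 ∧ om2 γ κ (f ξ) ξ ≤ ω))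
    {ρ u : ℝ} (hρ : ρ = ∫ ξ, (f ξ).1) (hu : ρ * u = ∫ ξ, (f ξ).2) (hρ0 : 0 < ρ) :
    u + ag γ κ * ρ ^ th γ ≤ ω := by
  set μ := ag γ κ * (1 + th γ) * ρ ^ th γ
  have hbound : ρ * u ≤ (ω - μ) * ρ + ag γ κ * th γ * ρ ^ (1 + th γ) :=
    calc ρ * u = ∫ ξ, (f ξ).2 := hu
      _ ≤ ∫ ξ, ((ω - μ) * (f ξ).1 + legendreBound γ κ μ (ω - ξ)) :=
        integral_mono_ae hfi.snd ((hfi.fst.const_mul _).add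
          (integrable_legendreBound_sub hγ hγ' μ ω))
          (hf.mono fun ξ hξ => snd_le_legendreBound hκ hγ hγ' μ hξ)
      _ = (ω - μ) * ρ + ag γ κ * th γ * ρ ^ (1 + th γ) := by
        rw [integral_add (hfi.fst.const_mul _) (integrable_legendreBound_sub hγ hγ' μ ω),
          integral_const_mul, ← hρ, integral_legendreBound_sub_optimal hκ hγ hγ' hρ0]
  rw [add_comm 1, Real.rpow_add_one hρ0.ne'] at hbound
  nlinarith [th_pos hγ]

lemma om2_reflect (f : ℝ × ℝ) (ξ : ℝ) : om2 γ κ (f.1, -f.2) (-ξ) = -om1 γ κ f ξ := by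
  have huf : uf γ (f.1, -f.2) (-ξ) = -uf γ f ξ := by
    simp only [uf]
    ring
  have hrf : rf γ κ (f.1, -f.2) (-ξ) = rf γ κ f ξ := by
    simp only [rf]
    ring_nf
  rw [om2, om1, huf, hrf]
  ring

lemma le_sub_ag_mul_rpow (hκ : 0 < κ) (hγ : 1 < γ) (hγ' : γ < 3) {ω : ℝ} {f : ℝ → ℝ × ℝ}
    (hfi : Integrable f) (hf : ∀ᵐ ξ, f ξ = 0 ∨ (0 < (f ξ).1 ∧ ω ≤ om1 γ κ (f ξ) ξ))
    {ρ u : ℝ} (hρ : ρ = ∫ ξ, (f ξ).1) (hu : ρ * u = ∫ ξ, (f ξ).2) (hρ0 : 0 < ρ) :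
    ω ≤ u - ag γ κ * ρ ^ th γ := by
  set g : ℝ → ℝ × ℝ := fun ξ => ((f (-ξ)).1, -(f (-ξ)).2)
  have hgi : Integrable g := hfi.comp_neg.fst.prodMk hfi.comp_neg.snd.neg
  have hg : ∀ᵐ ξ, g ξ = 0 ∨ (0 < (g ξ).1 ∧ om2 γ κ (g ξ) ξ ≤ -ω) := by
    filter_upwards [(Measure.measurePreserving_neg volume).quasiMeasurePreserving.ae hf]
      with ξ hξ
    refine hξ.imp (fun h => by simp [g, h]) fun ⟨h₁, h₂⟩ => ⟨h₁, ?_⟩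
    rw [← neg_neg ξ, om2_reflect, neg_neg]
    linarith
  have hgρ : ρ = ∫ ξ, (g ξ).1 := hρ.trans (integral_neg_eq_self (fun ξ => (f ξ).1) _).symm
  have hgu : ρ * -u = ∫ ξ, (g ξ).2 := by
    rw [integral_neg, integral_neg_eq_self (fun ξ => (f ξ).2), ← hu, mul_neg]
  linarith [add_ag_mul_rpow_le hκ hγ hγ' hgi hg hgρ hgu hρ0]

end Macroscopic

lemma eq_zero_or_of_mem_Dtil {γ κ ωmin ωmax ξ : ℝ} {f : ℝ × ℝ} (hf : f ∈ Dtil γ κ ωmin ωmax ξ) :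
    f = 0 ∨ (0 < f.1 ∧ ωmin ≤ om1 γ κ f ξ ∧ om2 γ κ f ξ ≤ ωmax) := by
  obtain ⟨hpos | hzero, hzero' | ⟨h₁, -, h₂⟩⟩ := hf
  exacts [Or.inl hzero', Or.inr ⟨hpos, h₁, h₂⟩, Or.inl hzero, Or.inl hzero]

theorem stmt13_general (γ κ : ℝ) (hκ : 0 < κ) (hγ : 1 < γ) (hγ' : γ < 3)
    (ωmin ωmax : ℝ)
    (f : ℝ → ℝ × ℝ) (hfi : Integrable f)
    (hfD : ∀ᵐ ξ : ℝ, f ξ ∈ Dtil γ κ ωmin ωmax ξ)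
    (ρ u : ℝ) (hρ : ρ = ∫ ξ : ℝ, (f ξ).1) (hu : ρ * u = ∫ ξ : ℝ, (f ξ).2) :
    ρ = 0 ∨ (ωmin ≤ u - ag γ κ * ρ ^ th γ ∧ u + ag γ κ * ρ ^ th γ ≤ ωmax) := by
  have hf := hfD.mono fun ξ hξ => eq_zero_or_of_mem_Dtil hξ
  have hρ0 : 0 ≤ ρ := hρ ▸ integral_nonneg_of_ae (hf.mono fun ξ hξ => by
    rcases hξ with h | h
    · simp [h]
    · exact h.1.le)
  rcases hρ0.eq_or_lt with hρ0 | hρ0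
  · exact Or.inl hρ0.symm
  refine Or.inr ⟨le_sub_ag_mul_rpow hκ hγ hγ' hfi ?_ hρ hu hρ0,
    add_ag_mul_rpow_le hκ hγ hγ' hfi ?_ hρ hu hρ0⟩
  · exact hf.mono fun ξ hξ => hξ.imp_right fun h => ⟨h.1, h.2.1⟩
  · exact hf.mono fun ξ hξ => hξ.imp_right fun h => ⟨h.1, h.2.2⟩

theorem stmt13 (γ κ : ℝ) (hκ : 0 < κ) (hγ : 1 < γ) (hγ' : γ < 3)
    (ωmin ωmax : ℝ) (hω : ωmin < ωmax)
    (f : ℝ → ℝ × ℝ) (hfi : Integrable f)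
    (hfD : ∀ᵐ ξ : ℝ, f ξ ∈ Dtil γ κ ωmin ωmax ξ)
    (ρ u : ℝ) (hρ : ρ = ∫ ξ : ℝ, (f ξ).1) (hu : ρ * u = ∫ ξ : ℝ, (f ξ).2) :
    ρ = 0 ∨ (ωmin ≤ u - ag γ κ * ρ ^ th γ ∧ u + ag γ κ * ρ ^ th γ ≤ ωmax) :=
  stmt13_general γ κ hκ hγ hγ' ωmin ωmax f hfi hfD ρ u hρ hu
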